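/- Let α be a real number with cos α = √2 − 1, and consider the 2×2 complex matrices A = [[1,0],[0,0]] and B = [[1,0],[0,0]] · [[cos α, −sin α],[sin α, cos α]]. Then ‖A+B‖_F² = ((1+√2)/2)·‖|A|+|B|‖_F², i.e., equality holds in the inequality ‖A+B‖_F ≤ √((1+√2)/2)·‖|A|+|B|‖_F, showing that the constant √((1+√2)/2) is optimal. -/

import Mathlib

open scoped Matrix ComplexOrder

/-- The absolute value `|A| := (A*A)^{1/2}` of a square complex matrix, i.e. the (unique)
positive semidefinite square root of `Aᴴ * A`. -/
noncomputable def matrixAbs {n : ℕ} (A : Matrix (Fin n) (Fin n) ℂ) :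
    Matrix (Fin n) (Fin n) ℂ :=
  ((Matrix.posSemidef_conjTranspose_mul_self A).1.eigenvectorUnitary : Matrix (Fin n) (Fin n) ℂ) *
    Matrix.diagonal ((↑) ∘ (Real.sqrt ·) ∘ (Matrix.posSemidef_conjTranspose_mul_self A).1.eigenvalues) *
    (star ((Matrix.posSemidef_conjTranspose_mul_self A).1.eigenvectorUnitary : Matrix (Fin n) (Fin n) ℂ))

/-- The Frobenius norm `‖A‖_F = (tr |A|²)^{1/2}` of a square complex matrix. -/
noncomputable def frobeniusNorm' {n : ℕ} (A : Matrix (Fin n) (Fin n) ℂ) : ℝ :=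
  Real.sqrt ((matrixAbs A ^ 2).trace.re)

/-! `A` is the orthogonal projection onto the first basis vector and `B = A R` with `R` a
rotation, so `Bᴴ B = Rᴴ A R` is again an orthogonal projection. A positive semidefinite square
root of a projection is the projection itself, hence `|A| = A` and `|B| = Bᴴ B`, and both
Frobenius norms become explicit in `c = cos α`: `‖A + B‖² = 2 + 2c` and
`‖|A| + |B|‖² = 2 + 2c²`. Their ratio `(1 + c) / (1 + c²)` equals `(1 + √2) / 2` at
`c = √2 - 1`. -/

open scoped MatrixOrder

open Matrix

section MatrixAbs

variable {n : ℕ}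

lemma matrixAbs_eq_cfcSqrt (M : Matrix (Fin n) (Fin n) ℂ) :
    matrixAbs M = CFC.sqrt (Mᴴ * M) := by
  have hM := posSemidef_conjTranspose_mul_self M
  rw [CFC.sqrt_eq_real_sqrt _ (nonneg_iff_posSemidef.mpr hM), cfcₙ_eq_cfc (hf0 := Real.sqrt_zero),
    hM.1.cfc_eq, IsHermitian.cfc, Unitary.conjStarAlgAut_apply, matrixAbs]
  rfl

lemma matrixAbs_sq (M : Matrix (Fin n) (Fin n) ℂ) : matrixAbs M ^ 2 = Mᴴ * M := by
  rw [matrixAbs_eq_cfcSqrt,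
    CFC.sq_sqrt _ (nonneg_iff_posSemidef.mpr (posSemidef_conjTranspose_mul_self M))]

lemma matrixAbs_eq_of_sq_eq {M P : Matrix (Fin n) (Fin n) ℂ} (hP : P.PosSemidef)
    (h : P ^ 2 = Mᴴ * M) : matrixAbs M = P := by
  rw [matrixAbs_eq_cfcSqrt, ← h, CFC.sqrt_sq P (nonneg_iff_posSemidef.mpr hP)]

lemma matrixAbs_eq_conjTranspose_mul_self {M : Matrix (Fin n) (Fin n) ℂ}
    (h : IsIdempotentElem (Mᴴ * M)) : matrixAbs M = Mᴴ * M :=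
  matrixAbs_eq_of_sq_eq (posSemidef_conjTranspose_mul_self M) (h.pow_eq two_ne_zero)

lemma matrixAbs_of_isHermitian_of_isIdempotentElem {P : Matrix (Fin n) (Fin n) ℂ}
    (hP : P.IsHermitian) (hPP : IsIdempotentElem P) : matrixAbs P = P := by
  have hPsq : Pᴴ * P = P := by rw [hP.eq, hPP.eq]
  rw [matrixAbs_eq_conjTranspose_mul_self (by rwa [hPsq]), hPsq]

lemma isIdempotentElem_conjTranspose_mul_self_of_mul_unitary
    {P U : Matrix (Fin n) (Fin n) ℂ} (hP : P.IsHermitian) (hPP : IsIdempotentElem P)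
    (hU : U * Uᴴ = 1) : IsIdempotentElem ((P * U)ᴴ * (P * U)) := by
  have h : (P * U)ᴴ * (P * U) = Uᴴ * P * U := by
    rw [conjTranspose_mul, hP.eq, mul_assoc, ← mul_assoc P, hPP.eq, mul_assoc]
  rw [h, IsIdempotentElem]
  calc Uᴴ * P * U * (Uᴴ * P * U) = Uᴴ * (P * (U * Uᴴ) * P) * U := by simp only [mul_assoc]
    _ = Uᴴ * P * U := by rw [hU, mul_one, hPP.eq, mul_assoc]

lemma frobeniusNorm'_sq (M : Matrix (Fin n) (Fin n) ℂ) :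
    frobeniusNorm' M ^ 2 = ∑ i, ∑ j, ‖M i j‖ ^ 2 := by
  have h : (matrixAbs M ^ 2).trace.re = ∑ j, ∑ i, ‖M i j‖ ^ 2 := by
    simp [matrixAbs_sq, trace, mul_apply, ← Complex.normSq_eq_norm_sq, Complex.normSq_apply]
  rw [frobeniusNorm', h, Real.sq_sqrt (by positivity), Finset.sum_comm]

lemma frobeniusNorm'_map_ofReal_sq (M : Matrix (Fin n) (Fin n) ℝ) :
    frobeniusNorm' (M.map (↑)) ^ 2 = ∑ i, ∑ j, M i j ^ 2 := by
  simp [frobeniusNorm'_sq]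

end MatrixAbs

section TwoByTwo

variable {c s : ℝ}

lemma rotation_mul_conjTranspose (h : c ^ 2 + s ^ 2 = 1) :
    !![(c : ℂ), -s; s, c] * !![(c : ℂ), -s; s, c]ᴴ = 1 := by
  have h' : (c : ℂ) ^ 2 + (s : ℂ) ^ 2 = 1 := by exact_mod_cast h
  ext i j
  fin_cases i <;> fin_cases j <;>
    simp [mul_apply, Fin.sum_univ_two, ← sq, mul_comm, h', add_comm ((s : ℂ) ^ 2)]

lemma isHermitian_e₁₁ : (!![1, 0; 0, 0] : Matrix (Fin 2) (Fin 2) ℂ).IsHermitian := by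
  ext i j; fin_cases i <;> fin_cases j <;> simp

lemma isIdempotentElem_e₁₁ :
    IsIdempotentElem (!![1, 0; 0, 0] : Matrix (Fin 2) (Fin 2) ℂ) := by
  rw [IsIdempotentElem]; ext i j; fin_cases i <;> fin_cases j <;> simp

lemma frobeniusNorm'_e₁₁_add_e₁₁_mul_rotation_sq (h : c ^ 2 + s ^ 2 = 1) :
    frobeniusNorm' (!![1, 0; 0, 0] + !![1, 0; 0, 0] * !![(c : ℂ), -s; s, c]) ^ 2
      = 2 + 2 * c := by
  have hsum : !![1, 0; 0, 0] + !![1, 0; 0, 0] * !![(c : ℂ), -s; s, c]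
      = (!![1 + c, -s; 0, 0]).map (↑) := by
    ext i j; fin_cases i <;> fin_cases j <;> simp
  rw [hsum, frobeniusNorm'_map_ofReal_sq]
  simp only [Fin.sum_univ_two, of_apply, cons_val', cons_val_zero,
    cons_val_one, cons_val_fin_one]
  linear_combination h

lemma frobeniusNorm'_matrixAbs_e₁₁_add_matrixAbs_e₁₁_mul_rotation_sq
    (h : c ^ 2 + s ^ 2 = 1) :
    frobeniusNorm' (matrixAbs !![1, 0; 0, 0] +
      matrixAbs (!![1, 0; 0, 0] * !![(c : ℂ), -s; s, c])) ^ 2 = 2 + 2 * c ^ 2 := by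
  rw [matrixAbs_of_isHermitian_of_isIdempotentElem isHermitian_e₁₁ isIdempotentElem_e₁₁,
    matrixAbs_eq_conjTranspose_mul_self
      (isIdempotentElem_conjTranspose_mul_self_of_mul_unitary isHermitian_e₁₁
        isIdempotentElem_e₁₁ (rotation_mul_conjTranspose h))]
  have habs_sum : !![1, 0; 0, 0] + (!![1, 0; 0, 0] * !![(c : ℂ), -s; s, c])ᴴ *
      (!![1, 0; 0, 0] * !![(c : ℂ), -s; s, c])
      = (!![1 + c ^ 2, -(c * s); -(c * s), s ^ 2]).map (↑) := by
    ext i j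
    fin_cases i <;> fin_cases j <;> simp [mul_apply, Fin.sum_univ_two, sq, mul_comm]
  rw [habs_sum, frobeniusNorm'_map_ofReal_sq]
  simp only [Fin.sum_univ_two, of_apply, cons_val', cons_val_zero,
    cons_val_one, cons_val_fin_one]
  linear_combination (1 + c ^ 2 + s ^ 2) * h

end TwoByTwo

/-- **Sharpness of Lee's constant:** with `cos α = √2 − 1`,
`A = [[1,0],[0,0]]` and `B = [[1,0],[0,0]] · [[cos α, −sin α],[sin α, cos α]]`,
equality `‖A+B‖_F² = ((1+√2)/2)·‖|A|+|B|‖_F²` holds. -/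
theorem sq_frobenius_norm_add_eq_of_cos_eq (α : ℝ) (hα : Real.cos α = Real.sqrt 2 - 1)
    (A B : Matrix (Fin 2) (Fin 2) ℂ)
    (hA : A = !![1, 0; 0, 0])
    (hB : B = !![1, 0; 0, 0] *
      !![(Real.cos α : ℂ), -(Real.sin α : ℂ); (Real.sin α : ℂ), (Real.cos α : ℂ)]) :
    frobeniusNorm' (A + B) ^ 2 =
      ((1 + Real.sqrt 2) / 2) * frobeniusNorm' (matrixAbs A + matrixAbs B) ^ 2 := by
  have hcs := Real.cos_sq_add_sin_sq α
  subst hA hB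
  rw [frobeniusNorm'_e₁₁_add_e₁₁_mul_rotation_sq hcs,
    frobeniusNorm'_matrixAbs_e₁₁_add_matrixAbs_e₁₁_mul_rotation_sq hcs, hα]
  linear_combination (1 - Real.sqrt 2) * Real.sq_sqrt zero_le_two
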